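/- Let v solve the (d-1)-dimensional linear plate equation ∂_t²v + (1/12)Δ²_{x'} v = g on (-L,L)^{d-1} × (0,T) with tangential periodicity, and define the ansatz ũ^h(x,t) = h^θ(0, hv) + h^{2+θ}(-x_d ∇_{x'}v, 0) + h^{4+θ}((x_d³/3 - x_d/4)∇_{x'}Δ_{x'}v, 0) + h^{5+θ}(0, (x_d²/48 - x_d⁴/24 - 1/(24·16))Δ²_{x'}v). Then: (a) the scaled symmetric gradient satisfies the traction-free boundary condition exactly, (1/h)ε_h(ũ^h) e_d |_{x_d = ±1/2} = 0; and (b) ∂_t² ũ^h - h^{-2} div_h (D²W̃(0) ∇_h ũ^h) = h^{1+θ}(0, g) - r_h with ‖r_h‖_{C([0,T];L²(Ω))} ≤ C h^{2+θ}, where W(F) = dist(F, SO(d))² so that D²W̃(0)F = sym F. -/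

import Mathlib

/- STATEMENT 19: first-order ansatz for the linear Germain–Lagrange regime. If v solves
∂ₜ²v + (1/12)Δ²_{x'}v = g (tangentially periodic), and ũ^h is the explicit ansatz
ũ^h = h^θ(0,hv) + h^{2+θ}(-x_d∇'v,0) + h^{4+θ}((x_d³/3 - x_d/4)∇'Δ'v,0)
      + h^{5+θ}(0,(x_d²/48 - x_d⁴/24 - 1/384)Δ'²v),
then (a) the traction-free condition (1/h)ε_h(ũ^h)e_d = 0 holds exactly at x_d = ±1/2, and
(b) ∂ₜ²ũ^h - h⁻²div_h(D²W̃(0)∇_hũ^h) = h^{1+θ}(0,g) - r_h with ‖r_h(t)‖_{L²(Ω)} ≤ Ch^{2+θ}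
(squared form below), where W(F) = dist(F,SO(d))² so that D²W̃(0)F = sym F. -/

open MeasureTheory Set
noncomputable section

variable (d : ℕ) [NeZero d] (L h θ : ℝ)

/-- space-time point (X, t), X ∈ ℝ^d (last coordinate normal). -/
abbrev P (d : ℕ) := (Fin d → ℝ) × ℝ

/-- the index of the normal coordinate. -/
def nd : Fin d := ⟨d - 1, Nat.sub_lt (Nat.pos_of_ne_zero (NeZero.ne d)) one_pos⟩

/-- spatial partial derivative ∂_{x_j}. -/
def DXf (j : Fin d) (f : P d → ℝ) (p : P d) : ℝ := fderiv ℝ f p (Pi.single j 1, 0)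

/-- time derivative ∂_t. -/
def DTf (f : P d → ℝ) (p : P d) : ℝ := fderiv ℝ f p (0, 1)

/-- tangential Laplacian Δ_{x'}. -/
def lap (f : P d → ℝ) (p : P d) : ℝ :=
  ∑ j ∈ Finset.univ.filter (fun j : Fin d => (j : ℕ) < d - 1), DXf d j (DXf d j f) p

/-- the ansatz ũ^h (i-th component). -/
def util (v : P d → ℝ) (i : Fin d) (p : P d) : ℝ :=
  if (i : ℕ) < d - 1 then
    h ^ ((2 : ℝ) + θ) * (-(p.1 (nd d)) * DXf d i v p)
      + h ^ ((4 : ℝ) + θ) *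
          (((p.1 (nd d)) ^ 3 / 3 - p.1 (nd d) / 4) * DXf d i (lap d v) p)
  else
    h ^ ((1 : ℝ) + θ) * v p
      + h ^ ((5 : ℝ) + θ) *
          (((p.1 (nd d)) ^ 2 / 48 - (p.1 (nd d)) ^ 4 / 24 - 1 / 384) * lap d (lap d v) p)

/-- the scaled gradient ∇_h ũ^h. -/
def gradh (v : P d → ℝ) (i j : Fin d) (p : P d) : ℝ :=
  (if (j : ℕ) < d - 1 then 1 else h⁻¹) * DXf d j (util d h θ v i) p

/-- the scaled symmetrized gradient ε_h(ũ^h) = D²W̃(0)∇_hũ^h for W(F)=dist(F,SO(d))². -/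
def symh (v : P d → ℝ) (i j : Fin d) : P d → ℝ := fun p =>
  (gradh d h θ v i j p + gradh d h θ v j i p) / 2

/-- scaled divergence of the stress: (div_h ε_h(ũ^h))_i. -/
def divS (v : P d → ℝ) (i : Fin d) (p : P d) : ℝ :=
  ∑ j : Fin d, (if (j : ℕ) < d - 1 then 1 else h⁻¹) * DXf d j (symh d h θ v i j) p

/-- the residual r_h := h^{1+θ}(0,g) - (∂ₜ²ũ^h - h⁻² div_h ε_h(ũ^h)). -/
def resid (v g : P d → ℝ) (i : Fin d) (p : P d) : ℝ :=
  h ^ ((1 : ℝ) + θ) * (if (i : ℕ) = d - 1 then g p else 0)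
    - (DTf d (DTf d (util d h θ v i)) p - h⁻¹ ^ 2 * divS d h θ v i p)

/-- Ω = (-L,L)^{d-1} × (-1/2,1/2). -/
def OmegaX : Set (Fin d → ℝ) :=
  {x | ∀ i : Fin d, if (i : ℕ) < d - 1 then x i ∈ Ioo (-L) L
        else x i ∈ Ioo (-(1/2) : ℝ) (1/2)}


set_option linter.unusedSectionVars false

namespace S19
variable {d : ℕ} [NeZero d]

/-- directional derivative -/
def Dw (w : P d) (f : P d → ℝ) (p : P d) : ℝ := fderiv ℝ f p w

lemma DXf_eq_Dw (j : Fin d) (f : P d → ℝ) : DXf d j f = Dw (Pi.single j 1, 0) f := rfl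
lemma DTf_eq_Dw (f : P d → ℝ) : DTf d f = Dw ((0 : Fin d → ℝ), 1) f := rfl

lemma Dw_contDiff {f : P d → ℝ} (hf : ContDiff ℝ (⊤ : ℕ∞) f) (w : P d) : ContDiff ℝ (⊤ : ℕ∞) (Dw w f) := by
  have h1 : ContDiff ℝ (⊤ : ℕ∞) (fderiv ℝ f) := hf.fderiv_right (by simp)
  exact (ContinuousLinearMap.apply ℝ ℝ w).contDiff.comp h1

lemma Dw_add {f g : P d → ℝ} {p : P d} (w : P d) (hf : DifferentiableAt ℝ f p)
    (hg : DifferentiableAt ℝ g p) :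
    Dw w (fun q => f q + g q) p = Dw w f p + Dw w g p := by
  simp [Dw, fderiv_fun_add hf hg]

lemma Dw_const_mul {f : P d → ℝ} {p : P d} (w : P d) (c : ℝ) (hf : DifferentiableAt ℝ f p) :
    Dw w (fun q => c * f q) p = c * Dw w f p := by
  simp [Dw, fderiv_const_mul hf]

lemma Dw_div_const {f : P d → ℝ} {p : P d} (w : P d) (c : ℝ) (hf : DifferentiableAt ℝ f p) :
    Dw w (fun q => f q / c) p = Dw w f p / c := by
  simp [Dw, div_eq_mul_inv, fderiv_mul_const hf, mul_comm]

/-- the coordinate continuous linear map -/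
def coordCLM (k : Fin d) : P d →L[ℝ] ℝ :=
  (ContinuousLinearMap.proj k).comp (ContinuousLinearMap.fst ℝ (Fin d → ℝ) ℝ)

lemma coordCLM_apply (k : Fin d) (w : P d) : coordCLM k w = w.1 k := rfl

lemma contDiff_phiz_mul {φ : ℝ → ℝ} (hφ : ContDiff ℝ (⊤ : ℕ∞) φ) {F : P d → ℝ}
    (hF : ContDiff ℝ (⊤ : ℕ∞) F) (k : Fin d) :
    ContDiff ℝ (⊤ : ℕ∞) (fun p : P d => φ (p.1 k) * F p) :=
  (hφ.comp (coordCLM k).contDiff).mul hF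

lemma Dw_phiz_mul {φ : ℝ → ℝ} (hφ : Differentiable ℝ φ) {F : P d → ℝ} {p : P d}
    (hF : DifferentiableAt ℝ F p) (w : P d) (k : Fin d) :
    Dw w (fun q => φ (q.1 k) * F q) p
      = deriv φ (p.1 k) * w.1 k * F p + φ (p.1 k) * Dw w F p := by
  have hz : HasFDerivAt (fun q : P d => φ (q.1 k))
      (deriv φ (p.1 k) • coordCLM k) p :=
    (hφ (p.1 k)).hasDerivAt.comp_hasFDerivAt p (coordCLM k).hasFDerivAt
  have := hz.mul hF.hasFDerivAt
  have hD : fderiv ℝ (fun q => φ (q.1 k) * F q) p = φ (p.1 k) • fderiv ℝ F p + F p • deriv φ (p.1 k) • coordCLM k := this.fderiv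
  simp only [Dw, hD, ContinuousLinearMap.add_apply, ContinuousLinearMap.smul_apply,
    coordCLM_apply, smul_eq_mul]
  ring

lemma Dw_sum {ι : Type*} (s : Finset ι) (F : ι → P d → ℝ) {p : P d}
    (hF : ∀ i ∈ s, DifferentiableAt ℝ (F i) p) (w : P d) :
    Dw w (fun q => ∑ i ∈ s, F i q) p = ∑ i ∈ s, Dw w (F i) p := by
  simp only [Dw]
  rw [fderiv_fun_sum hF]
  simp

lemma Dw_comm {f : P d → ℝ} (hf : ContDiff ℝ (⊤ : ℕ∞) f) (w w' : P d) (p : P d) :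
    Dw w (Dw w' f) p = Dw w' (Dw w f) p := by
  have hd : ∀ q, HasFDerivAt f (fderiv ℝ f q) q :=
    fun q => (hf.differentiable (by simp) q).hasFDerivAt
  have h2 : HasFDerivAt (fderiv ℝ f) (fderiv ℝ (fderiv ℝ f) p) p :=
    ((hf.fderiv_right (m := 1) (WithTop.coe_le_coe.2 le_top)).differentiable (by simp) p).hasFDerivAt
  have hsymm := second_derivative_symmetric hd h2 w w'
  have key : ∀ u u' : P d, Dw u (Dw u' f) p = (fderiv ℝ (fderiv ℝ f) p u) u' := by
    intro u u'
    have happ : HasFDerivAt (fun q => (fderiv ℝ f q) u')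
        ((ContinuousLinearMap.apply ℝ ℝ u').comp (fderiv ℝ (fderiv ℝ f) p)) p :=
      (ContinuousLinearMap.apply ℝ ℝ u').hasFDerivAt.comp p h2
    show (fderiv ℝ (fun q => (fderiv ℝ f q) u') p) u = _
    rw [happ.fderiv]
    rfl
  rw [key w w', key w' w, hsymm]


lemma tang_ne_nd {j : Fin d} (hj : (j : ℕ) < d - 1) : j ≠ nd d := by
  intro h; rw [h] at hj; simp [nd] at hj

lemma eq_nd_of_not_tang {j : Fin d} (hj : ¬ (j : ℕ) < d - 1) : j = nd d := by
  have := j.isLt; apply Fin.ext; simp only [nd]; omega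

lemma single_tang_nd {j : Fin d} (hj : (j : ℕ) < d - 1) :
    (Pi.single j (1:ℝ) : Fin d → ℝ) (nd d) = 0 :=
  by rw [Pi.single_eq_of_ne (tang_ne_nd hj).symm]

lemma single_nd_nd : (Pi.single (nd d) (1:ℝ) : Fin d → ℝ) (nd d) = 1 := Pi.single_eq_same _ _

lemma sum_fin_split (f : Fin d → ℝ) :
    ∑ j, f j
      = (∑ j ∈ Finset.univ.filter (fun j : Fin d => (j : ℕ) < d - 1), f j) + f (nd d) := by
  classical
  rw [← Finset.sum_filter_add_sum_filter_not Finset.univ (fun j : Fin d => (j : ℕ) < d - 1) f]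
  congr 1
  have h1 : Finset.univ.filter (fun j : Fin d => ¬ (j : ℕ) < d - 1) = {nd d} := by
    ext j
    simp only [Finset.mem_filter, Finset.mem_univ, true_and, Finset.mem_singleton]
    constructor
    · exact fun h => eq_nd_of_not_tang h
    · intro h; subst h; simp [nd]
  rw [h1, Finset.sum_singleton]

/-- invariance under translations in the normal direction. -/
def InvN (f : P d → ℝ) : Prop :=
  ∀ (p : P d) (c : ℝ), f (p.1 + c • (Pi.single (nd d) 1 : Fin d → ℝ), p.2) = f p

lemma invN_of_tang {v : P d → ℝ}
    (hvtang : ∀ p q : P d, (∀ j : Fin d, (j : ℕ) < d - 1 → p.1 j = q.1 j) →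
      p.2 = q.2 → v p = v q) : InvN v := by
  intro p c
  apply hvtang
  · intro j hj
    simp [Pi.single_eq_of_ne (tang_ne_nd hj)]
  · rfl

lemma InvN.dw {f : P d → ℝ} (hf : Differentiable ℝ f) (hI : InvN f) (w : P d) :
    InvN (Dw w f) := by
  intro p c
  set s : P d := ((c • (Pi.single (nd d) 1 : Fin d → ℝ) : Fin d → ℝ), (0:ℝ)) with hs
  have hshift : ∀ q : P d, q + s = (q.1 + c • (Pi.single (nd d) 1 : Fin d → ℝ), q.2) := by
    intro q; simp [hs, Prod.ext_iff]
  have hfs : (fun q : P d => f (q + s)) = f := by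
    funext q; rw [hshift q]; exact hI q c
  have h1 : HasFDerivAt (fun q : P d => f (q + s)) (fderiv ℝ f (p + s)) p := by
    have := (hf (p + s)).hasFDerivAt.comp p ((hasFDerivAt_id p).add_const s)
    simpa [Function.comp_def] using this
  rw [hfs] at h1
  have heq : fderiv ℝ f (p + s) = fderiv ℝ f p := h1.unique (hf p).hasFDerivAt
  show Dw w f (p.1 + c • (Pi.single (nd d) 1 : Fin d → ℝ), p.2) = Dw w f p
  rw [← hshift p]
  simp [Dw, heq]

lemma InvN.dxn_zero {f : P d → ℝ} (hf : Differentiable ℝ f) (hI : InvN f) (p : P d) :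
    DXf d (nd d) f p = 0 := by
  set w0 : P d := ((Pi.single (nd d) 1 : Fin d → ℝ), (0:ℝ)) with hw0
  have hγ : HasDerivAt (fun s : ℝ => p + s • w0) w0 0 := by
    simpa using ((hasDerivAt_id (0:ℝ)).smul_const w0).const_add p
  have hγ0 : p + (0:ℝ) • w0 = p := by simp
  have hfd : HasFDerivAt f (fderiv ℝ f p) (p + (0:ℝ) • w0) := by
    rw [hγ0]; exact (hf p).hasFDerivAt
  have hcomp : HasDerivAt (fun s : ℝ => f (p + s • w0)) (fderiv ℝ f p w0) 0 :=
    hfd.comp_hasDerivAt 0 hγ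
  have hconst : (fun s : ℝ => f (p + s • w0)) = fun _ => f p := by
    funext s
    have h2 : p + s • w0 = (p.1 + s • (Pi.single (nd d) 1 : Fin d → ℝ), p.2) := by
      simp [hw0, Prod.ext_iff]
    rw [h2]; exact hI p s
  rw [hconst] at hcomp
  have := (hasDerivAt_const (0:ℝ) (f p)).unique hcomp
  simpa [DXf, hw0] using this.symm

end S19
-- coefficient polynomials
namespace S19
def qA : ℝ → ℝ := fun z => -z
def qB : ℝ → ℝ := fun z => z^3/3 - z/4
def qBp : ℝ → ℝ := fun z => z^2 - 1/4
def qC : ℝ → ℝ := fun z => z^2/48 - z^4/24 - 1/384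
def qCp : ℝ → ℝ := fun z => z/24 - z^3/6
def qCpp : ℝ → ℝ := fun z => 1/24 - z^2/2

lemma contDiff_qA : ContDiff ℝ (⊤ : ℕ∞) qA := contDiff_id.neg
lemma contDiff_qB : ContDiff ℝ (⊤ : ℕ∞) qB :=
  ((contDiff_id.pow 3).div_const 3).sub (contDiff_id.div_const 4)
lemma contDiff_qBp : ContDiff ℝ (⊤ : ℕ∞) qBp :=
  (contDiff_id.pow 2).sub contDiff_const
lemma contDiff_qC : ContDiff ℝ (⊤ : ℕ∞) qC :=
  (((contDiff_id.pow 2).div_const 48).sub ((contDiff_id.pow 4).div_const 24)).sub contDiff_const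
lemma contDiff_qCp : ContDiff ℝ (⊤ : ℕ∞) qCp :=
  (contDiff_id.div_const 24).sub ((contDiff_id.pow 3).div_const 6)

lemma deriv_qA (z : ℝ) : deriv qA z = -1 := by
  have h : HasDerivAt qA (-1) z := by exact (hasDerivAt_id z).neg
  exact h.deriv
lemma deriv_qB (z : ℝ) : deriv qB z = qBp z := by
  have h : HasDerivAt qB (qBp z) z := by
    unfold qB qBp
    have := ((hasDerivAt_pow 3 z).div_const 3).sub ((hasDerivAt_id z).div_const 4)
    refine this.congr_deriv ?_
    push_cast; ring
  exact h.deriv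
lemma deriv_qBp (z : ℝ) : deriv qBp z = 2 * z := by
  have h : HasDerivAt qBp (2 * z) z := by
    unfold qBp
    have := (hasDerivAt_pow 2 z).sub_const (1/4)
    refine this.congr_deriv ?_
    push_cast; ring
  exact h.deriv
lemma deriv_qC (z : ℝ) : deriv qC z = qCp z := by
  have h : HasDerivAt qC (qCp z) z := by
    unfold qC qCp
    have := (((hasDerivAt_pow 2 z).div_const 48).sub ((hasDerivAt_pow 4 z).div_const 24)).sub_const (1/384)
    refine this.congr_deriv ?_
    push_cast; ring
  exact h.deriv
lemma deriv_qCp (z : ℝ) : deriv qCp z = qCpp z := by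
  have h : HasDerivAt qCp (qCpp z) z := by
    unfold qCp qCpp
    have := ((hasDerivAt_id z).div_const 24).sub ((hasDerivAt_pow 3 z).div_const 6)
    refine this.congr_deriv ?_
    push_cast; ring
  exact h.deriv

end S19


namespace S19
section Main
variable {d : ℕ} [NeZero d] {v : P d → ℝ}

lemma contDiff_lap {f : P d → ℝ} (hf : ContDiff ℝ (⊤ : ℕ∞) f) : ContDiff ℝ (⊤ : ℕ∞) (lap d f) :=
  ContDiff.sum fun j _ => Dw_contDiff (Dw_contDiff hf _) _

lemma invN_lap {f : P d → ℝ} (hf : ContDiff ℝ (⊤ : ℕ∞) f) (hIf : InvN f) : InvN (lap d f) := by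
  intro p c
  refine Finset.sum_congr rfl fun j _ => ?_
  exact ((hIf.dw (hf.differentiable (by simp)) _).dw
    ((Dw_contDiff hf _).differentiable (by simp)) _) p c

lemma util_tang_eq (h θ : ℝ) {i : Fin d} (hi : (i : ℕ) < d - 1) :
    util d h θ v i = fun p => h ^ ((2:ℝ)+θ) * (qA (p.1 (nd d)) * DXf d i v p)
      + h ^ ((4:ℝ)+θ) * (qB (p.1 (nd d)) * DXf d i (lap d v) p) := by
  funext p; simp [util, hi, qA, qB]

lemma util_nor_eq (h θ : ℝ) {i : Fin d} (hi : ¬ (i : ℕ) < d - 1) :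
    util d h θ v i = fun p => h ^ ((1:ℝ)+θ) * v p
      + h ^ ((5:ℝ)+θ) * (qC (p.1 (nd d)) * lap d (lap d v) p) := by
  funext p; simp [util, hi, qC]

lemma Dw_shape (w : P d) (c1 c2 : ℝ) {φ ψ : ℝ → ℝ} (hφ : ContDiff ℝ (⊤ : ℕ∞) φ)
    (hψ : ContDiff ℝ (⊤ : ℕ∞) ψ) {F G : P d → ℝ} (hF : ContDiff ℝ (⊤ : ℕ∞) F) (hG : ContDiff ℝ (⊤ : ℕ∞) G)
    (p : P d) :
    Dw w (fun q => c1 * (φ (q.1 (nd d)) * F q) + c2 * (ψ (q.1 (nd d)) * G q)) p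
      = c1 * (deriv φ (p.1 (nd d)) * w.1 (nd d) * F p + φ (p.1 (nd d)) * Dw w F p)
        + c2 * (deriv ψ (p.1 (nd d)) * w.1 (nd d) * G p + ψ (p.1 (nd d)) * Dw w G p) := by
  have d1 : DifferentiableAt ℝ (fun q : P d => φ (q.1 (nd d)) * F q) p :=
    ((contDiff_phiz_mul hφ hF (nd d)).differentiable (by simp)) p
  have d2 : DifferentiableAt ℝ (fun q : P d => ψ (q.1 (nd d)) * G q) p :=
    ((contDiff_phiz_mul hψ hG (nd d)).differentiable (by simp)) p
  rw [Dw_add w (d1.const_mul c1) (d2.const_mul c2), Dw_const_mul w c1 d1,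
    Dw_const_mul w c2 d2,
    Dw_phiz_mul (hφ.differentiable (by simp)) ((hF.differentiable (by simp)) p) w (nd d),
    Dw_phiz_mul (hψ.differentiable (by simp)) ((hG.differentiable (by simp)) p) w (nd d)]

lemma Dw_shape2 (w : P d) (c1 c2 : ℝ) {ψ : ℝ → ℝ} (hψ : ContDiff ℝ (⊤ : ℕ∞) ψ)
    {F G : P d → ℝ} (hF : ContDiff ℝ (⊤ : ℕ∞) F) (hG : ContDiff ℝ (⊤ : ℕ∞) G) (p : P d) :
    Dw w (fun q => c1 * F q + c2 * (ψ (q.1 (nd d)) * G q)) p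
      = c1 * Dw w F p
        + c2 * (deriv ψ (p.1 (nd d)) * w.1 (nd d) * G p + ψ (p.1 (nd d)) * Dw w G p) := by
  have d1 : DifferentiableAt ℝ F p := (hF.differentiable (by simp)) p
  have d2 : DifferentiableAt ℝ (fun q : P d => ψ (q.1 (nd d)) * G q) p :=
    ((contDiff_phiz_mul hψ hG (nd d)).differentiable (by simp)) p
  rw [Dw_add w (d1.const_mul c1) (d2.const_mul c2), Dw_const_mul w c1 d1,
    Dw_const_mul w c2 d2,
    Dw_phiz_mul (hψ.differentiable (by simp)) ((hG.differentiable (by simp)) p) w (nd d)]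

lemma gradh_TT (hv : ContDiff ℝ (⊤ : ℕ∞) v) (h θ : ℝ) {i j : Fin d}
    (hi : (i : ℕ) < d - 1) (hj : (j : ℕ) < d - 1) (p : P d) :
    gradh d h θ v i j p
      = h ^ ((2:ℝ)+θ) * (qA (p.1 (nd d)) * DXf d j (DXf d i v) p)
        + h ^ ((4:ℝ)+θ) * (qB (p.1 (nd d)) * DXf d j (DXf d i (lap d v)) p) := by
  have hdi : ContDiff ℝ (⊤ : ℕ∞) (DXf d i v) := Dw_contDiff hv _
  have hdil : ContDiff ℝ (⊤ : ℕ∞) (DXf d i (lap d v)) := Dw_contDiff (contDiff_lap hv) _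
  simp only [gradh, if_pos hj, one_mul]
  rw [util_tang_eq h θ hi, DXf_eq_Dw,
    Dw_shape _ _ _ contDiff_qA contDiff_qB hdi hdil]
  simp only [← DXf_eq_Dw, single_tang_nd hj, mul_zero, zero_mul, add_zero, zero_add]

lemma nd_not_tang : ¬ ((nd d : ℕ) < d - 1) := by simp [nd]

lemma Dw_shape1 (w : P d) (c1 : ℝ) {φ : ℝ → ℝ} (hφ : ContDiff ℝ (⊤ : ℕ∞) φ)
    {F : P d → ℝ} (hF : ContDiff ℝ (⊤ : ℕ∞) F) (p : P d) :
    Dw w (fun q => c1 * (φ (q.1 (nd d)) * F q)) p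
      = c1 * (deriv φ (p.1 (nd d)) * w.1 (nd d) * F p + φ (p.1 (nd d)) * Dw w F p) := by
  have d1 : DifferentiableAt ℝ (fun q : P d => φ (q.1 (nd d)) * F q) p :=
    ((contDiff_phiz_mul hφ hF (nd d)).differentiable (by simp)) p
  rw [Dw_const_mul w c1 d1,
    Dw_phiz_mul (hφ.differentiable (by simp)) ((hF.differentiable (by simp)) p) w (nd d)]

lemma dx_comm (hf : ContDiff ℝ (⊤ : ℕ∞) v) (i j : Fin d) (p : P d) :
    DXf d i (DXf d j v) p = DXf d j (DXf d i v) p := by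
  rw [DXf_eq_Dw, DXf_eq_Dw (f := v), DXf_eq_Dw, DXf_eq_Dw (f := v)]
  exact Dw_comm hf _ _ p

lemma dw_dx_comm_fun {f : P d → ℝ} (hf : ContDiff ℝ (⊤ : ℕ∞) f) (w : P d) (j : Fin d) :
    Dw w (DXf d j f) = DXf d j (Dw w f) := by
  funext q
  rw [DXf_eq_Dw, DXf_eq_Dw]
  exact Dw_comm hf _ _ q

lemma dx_lap_comm {f : P d → ℝ} (hf : ContDiff ℝ (⊤ : ℕ∞) f) (i : Fin d) (p : P d) :
    lap d (DXf d i f) p = DXf d i (lap d f) p := by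
  have step1 : DXf d i (lap d f) p
      = ∑ j ∈ Finset.univ.filter (fun j : Fin d => (j : ℕ) < d - 1),
          Dw (Pi.single i 1, 0) (DXf d j (DXf d j f)) p := by
    rw [DXf_eq_Dw]
    exact Dw_sum _ _ (fun j _ =>
      ((Dw_contDiff (Dw_contDiff hf _) _).differentiable (by simp)) p) _
  rw [step1]
  refine (Finset.sum_congr rfl fun j _ => ?_).symm
  have e1 : Dw (Pi.single i 1, 0) (DXf d j (DXf d j f)) p
      = DXf d j (Dw (Pi.single i 1, 0) (DXf d j f)) p := by
    have hdj : ContDiff ℝ (⊤ : ℕ∞) (DXf d j f) := Dw_contDiff hf _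
    rw [DXf_eq_Dw (f := DXf d j f), DXf_eq_Dw (f := Dw _ (DXf d j f))]
    exact Dw_comm hdj _ _ p
  rw [e1, dw_dx_comm_fun hf _ j, ← DXf_eq_Dw]

lemma gradh_TN (hv : ContDiff ℝ (⊤ : ℕ∞) v) (hI : InvN v) (h θ : ℝ) {i : Fin d}
    (hi : (i : ℕ) < d - 1) (p : P d) :
    gradh d h θ v i (nd d) p
      = h⁻¹ * (-(h ^ ((2:ℝ)+θ) * DXf d i v p)
          + h ^ ((4:ℝ)+θ) * (qBp (p.1 (nd d)) * DXf d i (lap d v) p)) := by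
  have hdi : ContDiff ℝ (⊤ : ℕ∞) (DXf d i v) := Dw_contDiff hv _
  have hdil : ContDiff ℝ (⊤ : ℕ∞) (DXf d i (lap d v)) := Dw_contDiff (contDiff_lap hv) _
  have z1 : DXf d (nd d) (DXf d i v) p = 0 :=
    InvN.dxn_zero (hdi.differentiable (by simp))
      (hI.dw (hv.differentiable (by simp)) _) p
  have z2 : DXf d (nd d) (DXf d i (lap d v)) p = 0 :=
    InvN.dxn_zero (hdil.differentiable (by simp))
      ((invN_lap hv hI).dw ((contDiff_lap hv).differentiable (by simp)) _) p
  simp only [gradh, if_neg (nd_not_tang (d := d))]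
  rw [util_tang_eq h θ hi, DXf_eq_Dw,
    Dw_shape _ _ _ contDiff_qA contDiff_qB hdi hdil]
  simp only [← DXf_eq_Dw, single_nd_nd, z1, z2, deriv_qA, deriv_qB, mul_zero, add_zero]
  ring

lemma gradh_NT (hv : ContDiff ℝ (⊤ : ℕ∞) v) (h θ : ℝ) {j : Fin d}
    (hj : (j : ℕ) < d - 1) (p : P d) :
    gradh d h θ v (nd d) j p
      = h ^ ((1:ℝ)+θ) * DXf d j v p
        + h ^ ((5:ℝ)+θ) * (qC (p.1 (nd d)) * DXf d j (lap d (lap d v)) p) := by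
  have hH : ContDiff ℝ (⊤ : ℕ∞) (lap d (lap d v)) := contDiff_lap (contDiff_lap hv)
  simp only [gradh, if_pos hj, one_mul]
  rw [util_nor_eq h θ (nd_not_tang (d := d)), DXf_eq_Dw,
    Dw_shape2 _ _ _ contDiff_qC hv hH]
  simp only [← DXf_eq_Dw, single_tang_nd hj, mul_zero, zero_mul, add_zero, zero_add]

lemma gradh_NN (hv : ContDiff ℝ (⊤ : ℕ∞) v) (hI : InvN v) (h θ : ℝ) (p : P d) :
    gradh d h θ v (nd d) (nd d) p
      = h⁻¹ * (h ^ ((5:ℝ)+θ) * (qCp (p.1 (nd d)) * lap d (lap d v) p)) := by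
  have hH : ContDiff ℝ (⊤ : ℕ∞) (lap d (lap d v)) := contDiff_lap (contDiff_lap hv)
  have z1 : DXf d (nd d) v p = 0 :=
    InvN.dxn_zero (hv.differentiable (by simp)) hI p
  have z2 : DXf d (nd d) (lap d (lap d v)) p = 0 :=
    InvN.dxn_zero (hH.differentiable (by simp))
      (invN_lap (contDiff_lap hv) (invN_lap hv hI)) p
  simp only [gradh, if_neg (nd_not_tang (d := d))]
  rw [util_nor_eq h θ (nd_not_tang (d := d)), DXf_eq_Dw,
    Dw_shape2 _ _ _ contDiff_qC hv hH]
  simp only [← DXf_eq_Dw, single_nd_nd, z1, z2, deriv_qC, mul_zero, add_zero, mul_one]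
  ring

-- rpow collapsing helpers
lemma hinv_rpow {h : ℝ} (hh : 0 < h) (a : ℝ) : h⁻¹ * h ^ (a + 1) = h ^ a := by
  rw [Real.rpow_add hh, Real.rpow_one]
  field_simp

lemma e21 {h θ : ℝ} (hh : 0 < h) : h⁻¹ * h ^ ((2:ℝ)+θ) = h ^ ((1:ℝ)+θ) := by
  have := hinv_rpow hh ((1:ℝ)+θ); rw [← this]; ring_nf
lemma e43 {h θ : ℝ} (hh : 0 < h) : h⁻¹ * h ^ ((4:ℝ)+θ) = h ^ ((3:ℝ)+θ) := by
  have := hinv_rpow hh ((3:ℝ)+θ); rw [← this]; ring_nf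
lemma e54 {h θ : ℝ} (hh : 0 < h) : h⁻¹ * h ^ ((5:ℝ)+θ) = h ^ ((4:ℝ)+θ) := by
  have := hinv_rpow hh ((4:ℝ)+θ); rw [← this]; ring_nf
lemma e32 {h θ : ℝ} (hh : 0 < h) : h⁻¹ * h ^ ((3:ℝ)+θ) = h ^ ((2:ℝ)+θ) := by
  have := hinv_rpow hh ((2:ℝ)+θ); rw [← this]; ring_nf

lemma symh_TN (hv : ContDiff ℝ (⊤ : ℕ∞) v) (hI : InvN v) {h : ℝ} (hh : 0 < h) (θ : ℝ)
    {i : Fin d} (hi : (i : ℕ) < d - 1) (p : P d) :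
    symh d h θ v i (nd d) p
      = (h ^ ((3:ℝ)+θ) * (qBp (p.1 (nd d)) * DXf d i (lap d v) p)
          + h ^ ((5:ℝ)+θ) * (qC (p.1 (nd d)) * DXf d i (lap d (lap d v)) p)) / 2 := by
  simp only [symh]
  rw [gradh_TN hv hI h θ hi p, gradh_NT hv h θ hi p]
  linear_combination (-(DXf d i v p)/2) * e21 (θ := θ) hh
    + ((qBp (p.1 (nd d)) * DXf d i (lap d v) p)/2) * e43 (θ := θ) hh

lemma symh_NN (hv : ContDiff ℝ (⊤ : ℕ∞) v) (hI : InvN v) {h : ℝ} (hh : 0 < h) (θ : ℝ)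
    (p : P d) :
    symh d h θ v (nd d) (nd d) p
      = h ^ ((4:ℝ)+θ) * (qCp (p.1 (nd d)) * lap d (lap d v) p) := by
  simp only [symh]
  rw [gradh_NN hv hI h θ p]
  linear_combination (qCp (p.1 (nd d)) * lap d (lap d v) p) * e54 (θ := θ) hh


lemma symh_symm (h θ : ℝ) (i j : Fin d) :
    symh d h θ v i j = symh d h θ v j i := by
  funext p; simp only [symh]; ring

lemma symh_TT_fun (hv : ContDiff ℝ (⊤ : ℕ∞) v) (h θ : ℝ) {i j : Fin d}
    (hi : (i : ℕ) < d - 1) (hj : (j : ℕ) < d - 1) :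
    symh d h θ v i j = fun p =>
      h ^ ((2:ℝ)+θ) * (qA (p.1 (nd d)) * DXf d j (DXf d i v) p)
        + h ^ ((4:ℝ)+θ) * (qB (p.1 (nd d)) * DXf d j (DXf d i (lap d v)) p) := by
  funext p
  simp only [symh]
  rw [gradh_TT hv h θ hi hj p, gradh_TT hv h θ hj hi p,
    dx_comm hv i j p, dx_comm (contDiff_lap hv) i j p]
  ring

lemma symh_TN_fun (hv : ContDiff ℝ (⊤ : ℕ∞) v) (hI : InvN v) {h : ℝ} (hh : 0 < h) (θ : ℝ)
    {i : Fin d} (hi : (i : ℕ) < d - 1) :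
    symh d h θ v i (nd d) = fun p =>
      (h ^ ((3:ℝ)+θ) * (qBp (p.1 (nd d)) * DXf d i (lap d v) p)
        + h ^ ((5:ℝ)+θ) * (qC (p.1 (nd d)) * DXf d i (lap d (lap d v)) p)) / 2 :=
  funext fun p => symh_TN hv hI hh θ hi p

lemma symh_NN_fun (hv : ContDiff ℝ (⊤ : ℕ∞) v) (hI : InvN v) {h : ℝ} (hh : 0 < h) (θ : ℝ) :
    symh d h θ v (nd d) (nd d) = fun p =>
      h ^ ((4:ℝ)+θ) * (qCp (p.1 (nd d)) * lap d (lap d v) p) :=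
  funext fun p => symh_NN hv hI hh θ p

lemma divS_tang (hv : ContDiff ℝ (⊤ : ℕ∞) v) (hI : InvN v) {h : ℝ} (hh : 0 < h) (θ : ℝ)
    {i : Fin d} (hi : (i : ℕ) < d - 1) (p : P d) :
    divS d h θ v i p
      = h ^ ((4:ℝ)+θ) * ((qB (p.1 (nd d)) + qCp (p.1 (nd d)) / 2)
          * DXf d i (lap d (lap d v)) p) := by
  have hdi : ContDiff ℝ (⊤ : ℕ∞) (DXf d i v) := Dw_contDiff hv _
  have hdil : ContDiff ℝ (⊤ : ℕ∞) (DXf d i (lap d v)) := Dw_contDiff (contDiff_lap hv) _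
  have hdiH : ContDiff ℝ (⊤ : ℕ∞) (DXf d i (lap d (lap d v))) :=
    Dw_contDiff (contDiff_lap (contDiff_lap hv)) _
  have zG : DXf d (nd d) (DXf d i (lap d v)) p = 0 :=
    InvN.dxn_zero (hdil.differentiable (by simp))
      ((invN_lap hv hI).dw ((contDiff_lap hv).differentiable (by simp)) _) p
  have zK : DXf d (nd d) (DXf d i (lap d (lap d v))) p = 0 :=
    InvN.dxn_zero (hdiH.differentiable (by simp))
      ((invN_lap (contDiff_lap hv) (invN_lap hv hI)).dw
        ((contDiff_lap (contDiff_lap hv)).differentiable (by simp)) _) p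
  simp only [divS]
  rw [sum_fin_split (fun j : Fin d =>
    (if (j : ℕ) < d - 1 then 1 else h⁻¹) * DXf d j (symh d h θ v i j) p)]
  have hterm : ∀ j ∈ Finset.univ.filter (fun j : Fin d => (j : ℕ) < d - 1),
      (if (j : ℕ) < d - 1 then 1 else h⁻¹) * DXf d j (symh d h θ v i j) p
        = h ^ ((2:ℝ)+θ) * (qA (p.1 (nd d)) * DXf d j (DXf d j (DXf d i v)) p)
          + h ^ ((4:ℝ)+θ) * (qB (p.1 (nd d)) * DXf d j (DXf d j (DXf d i (lap d v))) p) := by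
    intro j hjmem
    have hj : (j : ℕ) < d - 1 := (Finset.mem_filter.1 hjmem).2
    have hF : ContDiff ℝ (⊤ : ℕ∞) (DXf d j (DXf d i v)) := Dw_contDiff hdi _
    have hG : ContDiff ℝ (⊤ : ℕ∞) (DXf d j (DXf d i (lap d v))) := Dw_contDiff hdil _
    rw [if_pos hj, one_mul, symh_TT_fun hv h θ hi hj, DXf_eq_Dw,
      Dw_shape _ _ _ contDiff_qA contDiff_qB hF hG]
    simp only [← DXf_eq_Dw, single_tang_nd hj, mul_zero, zero_mul, add_zero, zero_add]
  rw [Finset.sum_congr rfl hterm]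
  rw [Finset.sum_add_distrib, ← Finset.mul_sum, ← Finset.mul_sum,
    ← Finset.mul_sum, ← Finset.mul_sum]
  have l1 : ∑ j ∈ Finset.univ.filter (fun j : Fin d => (j : ℕ) < d - 1),
      DXf d j (DXf d j (DXf d i v)) p = lap d (DXf d i v) p := rfl
  have l2 : ∑ j ∈ Finset.univ.filter (fun j : Fin d => (j : ℕ) < d - 1),
      DXf d j (DXf d j (DXf d i (lap d v))) p = lap d (DXf d i (lap d v)) p := rfl
  rw [l1, l2, dx_lap_comm hv i p, dx_lap_comm (contDiff_lap hv) i p]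
  -- last term
  have hdiff : DifferentiableAt ℝ (fun q : P d =>
      h ^ ((3:ℝ)+θ) * (qBp (q.1 (nd d)) * DXf d i (lap d v) q)
        + h ^ ((5:ℝ)+θ) * (qC (q.1 (nd d)) * DXf d i (lap d (lap d v)) q)) p :=
    ((((contDiff_const.mul (contDiff_phiz_mul contDiff_qBp hdil (nd d)))).add
      (contDiff_const.mul (contDiff_phiz_mul contDiff_qC hdiH (nd d)))).differentiable (by simp)) p
  have hlast : DXf d (nd d) (symh d h θ v i (nd d)) p
      = (h ^ ((3:ℝ)+θ) * (2 * p.1 (nd d) * DXf d i (lap d v) p)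
          + h ^ ((5:ℝ)+θ) * (qCp (p.1 (nd d)) * DXf d i (lap d (lap d v)) p)) / 2 := by
    rw [symh_TN_fun hv hI hh θ hi, DXf_eq_Dw, Dw_div_const _ 2 hdiff,
      Dw_shape _ _ _ contDiff_qBp contDiff_qC hdil hdiH]
    simp only [← DXf_eq_Dw, single_nd_nd, zG, zK, deriv_qBp, deriv_qC, mul_zero, add_zero,
      mul_one]
  rw [if_neg (nd_not_tang (d := d)), hlast]
  simp only [qA]
  linear_combination (p.1 (nd d) * DXf d i (lap d v) p) * e32 (θ := θ) hh
    + ((qCp (p.1 (nd d)) * DXf d i (lap d (lap d v)) p)/2) * e54 (θ := θ) hh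

lemma divS_nor (hv : ContDiff ℝ (⊤ : ℕ∞) v) (hI : InvN v) {h : ℝ} (hh : 0 < h) (θ : ℝ)
    (p : P d) :
    divS d h θ v (nd d) p
      = h ^ ((3:ℝ)+θ) * ((-(1:ℝ)/12) * lap d (lap d v) p)
        + h ^ ((5:ℝ)+θ) * ((qC (p.1 (nd d)) / 2) * lap d (lap d (lap d v)) p) := by
  have hLv : ContDiff ℝ (⊤ : ℕ∞) (lap d v) := contDiff_lap hv
  have hH : ContDiff ℝ (⊤ : ℕ∞) (lap d (lap d v)) := contDiff_lap hLv
  have zH : DXf d (nd d) (lap d (lap d v)) p = 0 :=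
    InvN.dxn_zero (hH.differentiable (by simp))
      (invN_lap hLv (invN_lap hv hI)) p
  simp only [divS]
  rw [sum_fin_split (fun j : Fin d =>
    (if (j : ℕ) < d - 1 then 1 else h⁻¹) * DXf d j (symh d h θ v (nd d) j) p)]
  have hterm : ∀ j ∈ Finset.univ.filter (fun j : Fin d => (j : ℕ) < d - 1),
      (if (j : ℕ) < d - 1 then 1 else h⁻¹) * DXf d j (symh d h θ v (nd d) j) p
        = (h ^ ((3:ℝ)+θ) * (qBp (p.1 (nd d)) * DXf d j (DXf d j (lap d v)) p)
            + h ^ ((5:ℝ)+θ) * (qC (p.1 (nd d)) * DXf d j (DXf d j (lap d (lap d v))) p)) / 2 := by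
    intro j hjmem
    have hj : (j : ℕ) < d - 1 := (Finset.mem_filter.1 hjmem).2
    have hdjl : ContDiff ℝ (⊤ : ℕ∞) (DXf d j (lap d v)) := Dw_contDiff hLv _
    have hdjH : ContDiff ℝ (⊤ : ℕ∞) (DXf d j (lap d (lap d v))) := Dw_contDiff hH _
    have hdiff : DifferentiableAt ℝ (fun q : P d =>
        h ^ ((3:ℝ)+θ) * (qBp (q.1 (nd d)) * DXf d j (lap d v) q)
          + h ^ ((5:ℝ)+θ) * (qC (q.1 (nd d)) * DXf d j (lap d (lap d v)) q)) p :=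
      ((((contDiff_const.mul (contDiff_phiz_mul contDiff_qBp hdjl (nd d)))).add
        (contDiff_const.mul (contDiff_phiz_mul contDiff_qC hdjH (nd d)))).differentiable (by simp)) p
    rw [if_pos hj, one_mul, symh_symm h θ (nd d) j, symh_TN_fun hv hI hh θ hj,
      DXf_eq_Dw, Dw_div_const _ 2 hdiff,
      Dw_shape _ _ _ contDiff_qBp contDiff_qC hdjl hdjH]
    simp only [← DXf_eq_Dw, single_tang_nd hj, mul_zero, zero_mul, add_zero, zero_add]
  rw [Finset.sum_congr rfl hterm]
  rw [← Finset.sum_div, Finset.sum_add_distrib, ← Finset.mul_sum, ← Finset.mul_sum,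
    ← Finset.mul_sum, ← Finset.mul_sum]
  have l1 : ∑ j ∈ Finset.univ.filter (fun j : Fin d => (j : ℕ) < d - 1),
      DXf d j (DXf d j (lap d v)) p = lap d (lap d v) p := rfl
  have l2 : ∑ j ∈ Finset.univ.filter (fun j : Fin d => (j : ℕ) < d - 1),
      DXf d j (DXf d j (lap d (lap d v))) p = lap d (lap d (lap d v)) p := rfl
  rw [l1, l2]
  -- last term
  rw [if_neg (nd_not_tang (d := d)), symh_NN_fun hv hI hh θ, DXf_eq_Dw,
    Dw_shape1 _ _ contDiff_qCp hH]
  simp only [← DXf_eq_Dw, single_nd_nd, zH, deriv_qCp, mul_zero, add_zero, mul_one]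
  simp only [qBp, qCpp]
  linear_combination ((1/24 - (p.1 (nd d))^2/2) * lap d (lap d v) p) * e43 (θ := θ) hh

lemma zero_pair_fst_nd : (((0 : Fin d → ℝ), (1:ℝ)) : P d).1 (nd d) = 0 := rfl

lemma dt2_util_tang (hv : ContDiff ℝ (⊤ : ℕ∞) v) (h θ : ℝ) {i : Fin d}
    (hi : (i : ℕ) < d - 1) (p : P d) :
    DTf d (DTf d (util d h θ v i)) p
      = h ^ ((2:ℝ)+θ) * (qA (p.1 (nd d)) * DTf d (DTf d (DXf d i v)) p)
        + h ^ ((4:ℝ)+θ) * (qB (p.1 (nd d)) * DTf d (DTf d (DXf d i (lap d v))) p) := by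
  have hdi : ContDiff ℝ (⊤ : ℕ∞) (DXf d i v) := Dw_contDiff hv _
  have hdil : ContDiff ℝ (⊤ : ℕ∞) (DXf d i (lap d v)) := Dw_contDiff (contDiff_lap hv) _
  have hti : ContDiff ℝ (⊤ : ℕ∞) (DTf d (DXf d i v)) := Dw_contDiff hdi _
  have htil : ContDiff ℝ (⊤ : ℕ∞) (DTf d (DXf d i (lap d v))) := Dw_contDiff hdil _
  have step1 : DTf d (util d h θ v i) = fun q =>
      h ^ ((2:ℝ)+θ) * (qA (q.1 (nd d)) * DTf d (DXf d i v) q)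
        + h ^ ((4:ℝ)+θ) * (qB (q.1 (nd d)) * DTf d (DXf d i (lap d v)) q) := by
    funext q
    rw [DTf_eq_Dw, util_tang_eq h θ hi,
      Dw_shape _ _ _ contDiff_qA contDiff_qB hdi hdil]
    simp only [← DTf_eq_Dw, zero_pair_fst_nd, Pi.zero_apply, mul_zero, zero_mul, add_zero, zero_add]
  rw [step1, DTf_eq_Dw, Dw_shape _ _ _ contDiff_qA contDiff_qB hti htil]
  simp only [← DTf_eq_Dw, zero_pair_fst_nd, Pi.zero_apply, mul_zero, zero_mul, add_zero, zero_add]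

lemma dt2_util_nor (hv : ContDiff ℝ (⊤ : ℕ∞) v) (h θ : ℝ) (p : P d) :
    DTf d (DTf d (util d h θ v (nd d))) p
      = h ^ ((1:ℝ)+θ) * DTf d (DTf d v) p
        + h ^ ((5:ℝ)+θ) * (qC (p.1 (nd d)) * DTf d (DTf d (lap d (lap d v))) p) := by
  have hH : ContDiff ℝ (⊤ : ℕ∞) (lap d (lap d v)) := contDiff_lap (contDiff_lap hv)
  have htv : ContDiff ℝ (⊤ : ℕ∞) (DTf d v) := Dw_contDiff hv _
  have htH : ContDiff ℝ (⊤ : ℕ∞) (DTf d (lap d (lap d v))) := Dw_contDiff hH _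
  have step1 : DTf d (util d h θ v (nd d)) = fun q =>
      h ^ ((1:ℝ)+θ) * DTf d v q
        + h ^ ((5:ℝ)+θ) * (qC (q.1 (nd d)) * DTf d (lap d (lap d v)) q) := by
    funext q
    rw [DTf_eq_Dw, util_nor_eq h θ (nd_not_tang (d := d)),
      Dw_shape2 _ _ _ contDiff_qC hv hH]
    simp only [← DTf_eq_Dw, zero_pair_fst_nd, Pi.zero_apply, mul_zero, zero_mul, add_zero, zero_add]
  rw [step1, DTf_eq_Dw, Dw_shape2 _ _ _ contDiff_qC htv htH]
  simp only [← DTf_eq_Dw, zero_pair_fst_nd, Pi.zero_apply, mul_zero, zero_mul, add_zero, zero_add]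

lemma e2_42 {h θ : ℝ} (hh : 0 < h) : h⁻¹ ^ 2 * h ^ ((4:ℝ)+θ) = h ^ ((2:ℝ)+θ) := by
  linear_combination h⁻¹ * e43 (θ := θ) hh + e32 (θ := θ) hh
lemma e2_31 {h θ : ℝ} (hh : 0 < h) : h⁻¹ ^ 2 * h ^ ((3:ℝ)+θ) = h ^ ((1:ℝ)+θ) := by
  linear_combination h⁻¹ * e32 (θ := θ) hh + e21 (θ := θ) hh
lemma e2_53 {h θ : ℝ} (hh : 0 < h) : h⁻¹ ^ 2 * h ^ ((5:ℝ)+θ) = h ^ ((3:ℝ)+θ) := by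
  linear_combination h⁻¹ * e54 (θ := θ) hh + e43 (θ := θ) hh

lemma resid_tang {g : P d → ℝ} (hv : ContDiff ℝ (⊤ : ℕ∞) v) (hI : InvN v) {h : ℝ}
    (hh : 0 < h) (θ : ℝ) {i : Fin d} (hi : (i : ℕ) < d - 1) (p : P d) :
    resid d h θ v g i p
      = h ^ ((2:ℝ)+θ) * (p.1 (nd d) * DTf d (DTf d (DXf d i v)) p)
        - h ^ ((4:ℝ)+θ) * (qB (p.1 (nd d)) * DTf d (DTf d (DXf d i (lap d v))) p)
        + h ^ ((2:ℝ)+θ) * ((qB (p.1 (nd d)) + qCp (p.1 (nd d)) / 2)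
            * DXf d i (lap d (lap d v)) p) := by
  have hne : ¬ ((i : ℕ) = d - 1) := by omega
  simp only [resid, if_neg hne, mul_zero]
  rw [dt2_util_tang hv h θ hi p, divS_tang hv hI hh θ hi p]
  simp only [qA]
  linear_combination ((qB (p.1 (nd d)) + qCp (p.1 (nd d)) / 2)
    * DXf d i (lap d (lap d v)) p) * e2_42 (θ := θ) hh

lemma resid_nor {g : P d → ℝ} (hv : ContDiff ℝ (⊤ : ℕ∞) v) (hI : InvN v) {h : ℝ}
    (hh : 0 < h) (θ : ℝ)
    (hPDE : ∀ p : P d, DTf d (DTf d v) p + (1 / 12) * lap d (lap d v) p = g p)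
    {i : Fin d} (hi : ¬ (i : ℕ) < d - 1) (p : P d) :
    resid d h θ v g i p
      = -(h ^ ((5:ℝ)+θ) * (qC (p.1 (nd d)) * DTf d (DTf d (lap d (lap d v))) p))
        + h ^ ((3:ℝ)+θ) * (qC (p.1 (nd d)) / 2 * lap d (lap d (lap d v)) p) := by
  have hieq : i = nd d := eq_nd_of_not_tang hi
  subst hieq
  have heq : ((nd d : Fin d) : ℕ) = d - 1 := rfl
  simp only [resid, if_pos heq]
  rw [dt2_util_nor hv h θ p, divS_nor hv hI hh θ p]
  linear_combination (-(h ^ ((1:ℝ)+θ))) * hPDE p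
    + (-(1/12) * lap d (lap d v) p) * e2_31 (θ := θ) hh
    + ((qC (p.1 (nd d)) / 2) * lap d (lap d (lap d v)) p) * e2_53 (θ := θ) hh

/-- the majorant function. -/
def psiF (v : P d → ℝ) (i : Fin d) (p : P d) : ℝ :=
  if (i : ℕ) < d - 1 then
    |p.1 (nd d) * DTf d (DTf d (DXf d i v)) p|
      + |qB (p.1 (nd d)) * DTf d (DTf d (DXf d i (lap d v))) p|
      + |(qB (p.1 (nd d)) + qCp (p.1 (nd d)) / 2) * DXf d i (lap d (lap d v)) p|
  else
    |qC (p.1 (nd d)) * DTf d (DTf d (lap d (lap d v))) p|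
      + |qC (p.1 (nd d)) / 2 * lap d (lap d (lap d v)) p|

lemma psiF_continuous (hv : ContDiff ℝ (⊤ : ℕ∞) v) (i : Fin d) : Continuous (psiF v i) := by
  have hcoord : Continuous fun p : P d => p.1 (nd d) := (coordCLM (nd d)).continuous
  have hqB : Continuous fun p : P d => qB (p.1 (nd d)) :=
    contDiff_qB.continuous.comp hcoord
  have hqC : Continuous fun p : P d => qC (p.1 (nd d)) :=
    contDiff_qC.continuous.comp hcoord
  have hqCp : Continuous fun p : P d => qCp (p.1 (nd d)) :=
    contDiff_qCp.continuous.comp hcoord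
  have hA : Continuous (DTf d (DTf d (DXf d i v))) :=
    (Dw_contDiff (Dw_contDiff (Dw_contDiff hv _) _) _).continuous
  have hB : Continuous (DTf d (DTf d (DXf d i (lap d v)))) :=
    (Dw_contDiff (Dw_contDiff (Dw_contDiff (contDiff_lap hv) _) _) _).continuous
  have hC : Continuous (DXf d i (lap d (lap d v))) :=
    (Dw_contDiff (contDiff_lap (contDiff_lap hv)) _).continuous
  have hD : Continuous (DTf d (DTf d (lap d (lap d v)))) :=
    (Dw_contDiff (Dw_contDiff (contDiff_lap (contDiff_lap hv)) _) _).continuous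
  have hE : Continuous (lap d (lap d (lap d v))) :=
    (contDiff_lap (contDiff_lap (contDiff_lap hv))).continuous
  unfold psiF
  by_cases hi : (i : ℕ) < d - 1
  · simp only [if_pos hi]
    exact ((hcoord.mul hA).abs.add (hqB.mul hB).abs).add
      (((hqB.add (hqCp.div_const 2)).mul hC).abs)
  · simp only [if_neg hi]
    exact (hqC.mul hD).abs.add (((hqC.div_const 2)).mul hE).abs

lemma resid_continuous {g : P d → ℝ} (hv : ContDiff ℝ (⊤ : ℕ∞) v) (hI : InvN v) {h : ℝ}
    (hh : 0 < h) (θ : ℝ)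
    (hPDE : ∀ p : P d, DTf d (DTf d v) p + (1 / 12) * lap d (lap d v) p = g p)
    (i : Fin d) : Continuous (fun p : P d => resid d h θ v g i p) := by
  have hcoord : Continuous fun p : P d => p.1 (nd d) := (coordCLM (nd d)).continuous
  have hqB : Continuous fun p : P d => qB (p.1 (nd d)) :=
    contDiff_qB.continuous.comp hcoord
  have hqC : Continuous fun p : P d => qC (p.1 (nd d)) :=
    contDiff_qC.continuous.comp hcoord
  have hqCp : Continuous fun p : P d => qCp (p.1 (nd d)) :=
    contDiff_qCp.continuous.comp hcoord
  have hA : Continuous (DTf d (DTf d (DXf d i v))) :=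
    (Dw_contDiff (Dw_contDiff (Dw_contDiff hv _) _) _).continuous
  have hB : Continuous (DTf d (DTf d (DXf d i (lap d v)))) :=
    (Dw_contDiff (Dw_contDiff (Dw_contDiff (contDiff_lap hv) _) _) _).continuous
  have hC : Continuous (DXf d i (lap d (lap d v))) :=
    (Dw_contDiff (contDiff_lap (contDiff_lap hv)) _).continuous
  have hD : Continuous (DTf d (DTf d (lap d (lap d v)))) :=
    (Dw_contDiff (Dw_contDiff (contDiff_lap (contDiff_lap hv)) _) _).continuous
  have hE : Continuous (lap d (lap d (lap d v))) :=
    (contDiff_lap (contDiff_lap (contDiff_lap hv))).continuous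
  by_cases hi : (i : ℕ) < d - 1
  · have heq : (fun p : P d => resid d h θ v g i p) = fun p =>
        h ^ ((2:ℝ)+θ) * (p.1 (nd d) * DTf d (DTf d (DXf d i v)) p)
          - h ^ ((4:ℝ)+θ) * (qB (p.1 (nd d)) * DTf d (DTf d (DXf d i (lap d v))) p)
          + h ^ ((2:ℝ)+θ) * ((qB (p.1 (nd d)) + qCp (p.1 (nd d)) / 2)
              * DXf d i (lap d (lap d v)) p) :=
      funext fun p => resid_tang hv hI hh θ hi p
    rw [heq]
    exact ((continuous_const.mul (hcoord.mul hA)).sub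
      (continuous_const.mul (hqB.mul hB))).add
      (continuous_const.mul ((hqB.add (hqCp.div_const 2)).mul hC))
  · have heq : (fun p : P d => resid d h θ v g i p) = fun p =>
        -(h ^ ((5:ℝ)+θ) * (qC (p.1 (nd d)) * DTf d (DTf d (lap d (lap d v))) p))
          + h ^ ((3:ℝ)+θ) * (qC (p.1 (nd d)) / 2 * lap d (lap d (lap d v)) p) :=
      funext fun p => resid_nor hv hI hh θ hPDE hi p
    rw [heq]
    exact ((continuous_const.mul (hqC.mul hD)).neg).add
      (continuous_const.mul ((hqC.div_const 2).mul hE))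

lemma resid_abs_le {g : P d → ℝ} (hv : ContDiff ℝ (⊤ : ℕ∞) v) (hI : InvN v) {h : ℝ}
    (hh : 0 < h) (hh1 : h ≤ 1) (θ : ℝ)
    (hPDE : ∀ p : P d, DTf d (DTf d v) p + (1 / 12) * lap d (lap d v) p = g p)
    (i : Fin d) (p : P d) :
    |resid d h θ v g i p| ≤ h ^ ((2:ℝ)+θ) * psiF v i p := by
  have h2nn : (0:ℝ) ≤ h ^ ((2:ℝ)+θ) := Real.rpow_nonneg hh.le _
  by_cases hi : (i : ℕ) < d - 1
  · rw [resid_tang hv hI hh θ hi p]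
    simp only [psiF, if_pos hi]
    have h42 : h ^ ((4:ℝ)+θ) ≤ h ^ ((2:ℝ)+θ) :=
      Real.rpow_le_rpow_of_exponent_ge hh hh1 (by linarith)
    have h4nn : (0:ℝ) ≤ h ^ ((4:ℝ)+θ) := Real.rpow_nonneg hh.le _
    set A := p.1 (nd d) * DTf d (DTf d (DXf d i v)) p
    set B := qB (p.1 (nd d)) * DTf d (DTf d (DXf d i (lap d v))) p
    set C := (qB (p.1 (nd d)) + qCp (p.1 (nd d)) / 2) * DXf d i (lap d (lap d v)) p
    have step : |h ^ ((2:ℝ)+θ) * A - h ^ ((4:ℝ)+θ) * B + h ^ ((2:ℝ)+θ) * C|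
        ≤ |h ^ ((2:ℝ)+θ) * A| + |h ^ ((4:ℝ)+θ) * B| + |h ^ ((2:ℝ)+θ) * C| :=
      (abs_add_le _ _).trans (add_le_add_left (abs_sub _ _) _)
    refine step.trans ?_
    rw [abs_mul (h ^ ((2:ℝ)+θ)) A, abs_mul (h ^ ((4:ℝ)+θ)) B, abs_mul (h ^ ((2:ℝ)+θ)) C,
      abs_of_nonneg h2nn, abs_of_nonneg h4nn]
    have hBB : h ^ ((4:ℝ)+θ) * |B| ≤ h ^ ((2:ℝ)+θ) * |B| :=
      mul_le_mul_of_nonneg_right h42 (abs_nonneg _)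
    linarith
  · rw [resid_nor hv hI hh θ hPDE hi p]
    simp only [psiF, if_neg hi]
    have h52 : h ^ ((5:ℝ)+θ) ≤ h ^ ((2:ℝ)+θ) :=
      Real.rpow_le_rpow_of_exponent_ge hh hh1 (by linarith)
    have h32 : h ^ ((3:ℝ)+θ) ≤ h ^ ((2:ℝ)+θ) :=
      Real.rpow_le_rpow_of_exponent_ge hh hh1 (by linarith)
    have h5nn : (0:ℝ) ≤ h ^ ((5:ℝ)+θ) := Real.rpow_nonneg hh.le _
    have h3nn : (0:ℝ) ≤ h ^ ((3:ℝ)+θ) := Real.rpow_nonneg hh.le _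
    set D := qC (p.1 (nd d)) * DTf d (DTf d (lap d (lap d v))) p
    set E := qC (p.1 (nd d)) / 2 * lap d (lap d (lap d v)) p
    have step : |-(h ^ ((5:ℝ)+θ) * D) + h ^ ((3:ℝ)+θ) * E|
        ≤ |h ^ ((5:ℝ)+θ) * D| + |h ^ ((3:ℝ)+θ) * E| := by
      refine (abs_add_le _ _).trans ?_
      rw [abs_neg]
    refine step.trans ?_
    rw [abs_mul (h ^ ((5:ℝ)+θ)) D, abs_mul (h ^ ((3:ℝ)+θ)) E,
      abs_of_nonneg h5nn, abs_of_nonneg h3nn]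
    have t1 : h ^ ((5:ℝ)+θ) * |D| ≤ h ^ ((2:ℝ)+θ) * |D| :=
      mul_le_mul_of_nonneg_right h52 (abs_nonneg _)
    have t2 : h ^ ((3:ℝ)+θ) * |E| ≤ h ^ ((2:ℝ)+θ) * |E| :=
      mul_le_mul_of_nonneg_right h32 (abs_nonneg _)
    linarith

-- boundary values
lemma qBp_bdry {z : ℝ} (hz : z = 1/2 ∨ z = -(1/2)) : qBp z = 0 := by
  rcases hz with hz | hz <;> rw [hz] <;> norm_num [qBp]
lemma qC_bdry {z : ℝ} (hz : z = 1/2 ∨ z = -(1/2)) : qC z = 0 := by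
  rcases hz with hz | hz <;> rw [hz] <;> norm_num [qC]
lemma qCp_bdry {z : ℝ} (hz : z = 1/2 ∨ z = -(1/2)) : qCp z = 0 := by
  rcases hz with hz | hz <;> rw [hz] <;> norm_num [qCp]

-- Omega facts
lemma OmegaX_subset_box {L : ℝ} (hL : 0 < L) :
    OmegaX d L ⊆ Set.univ.pi (fun _ : Fin d => Icc (-(L+1)) (L+1)) := by
  intro x hx i _
  have hxi := hx i
  by_cases hi : (i : ℕ) < d - 1
  · simp only [if_pos hi] at hxi
    exact ⟨by linarith [hxi.1], by linarith [hxi.2]⟩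
  · simp only [if_neg hi] at hxi
    have h1 := hxi.1; have h2 := hxi.2
    constructor <;> [nlinarith; nlinarith]

lemma OmegaX_measurable {L : ℝ} : MeasurableSet (OmegaX d L) := by
  have heq : OmegaX d L = Set.univ.pi
      (fun i : Fin d => if (i : ℕ) < d - 1 then Ioo (-L) L else Ioo (-(1/2):ℝ) (1/2)) := by
    ext x
    simp only [OmegaX, mem_setOf_eq, Set.mem_pi, mem_univ, true_implies]
    refine forall_congr' fun i => ?_
    by_cases hi : (i : ℕ) < d - 1 <;> simp [hi]
  rw [heq]
  exact MeasurableSet.univ_pi fun i => by split_ifs <;> exact measurableSet_Ioo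

end Main
end S19


theorem stmt19 (hd : d = 2 ∨ d = 3) (hL : 0 < L) (T θ : ℝ) (hT : 0 < T)
    (hθ0 : 0 < θ) (hθ1 : θ ≤ 1)
    (v g : P d → ℝ) (hv : ContDiff ℝ (⊤ : ℕ∞) v) (hg : ContDiff ℝ (⊤ : ℕ∞) g)
    (hvtang : ∀ p q : P d, (∀ j : Fin d, (j : ℕ) < d - 1 → p.1 j = q.1 j) →
      p.2 = q.2 → v p = v q)
    (hgtang : ∀ p q : P d, (∀ j : Fin d, (j : ℕ) < d - 1 → p.1 j = q.1 j) →
      p.2 = q.2 → g p = g q)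
    (hvper : ∀ (p : P d) (j : Fin d), (j : ℕ) < d - 1 →
      v (Function.update p.1 j (p.1 j + 2 * L), p.2) = v p)
    (hPDE : ∀ p : P d, DTf d (DTf d v) p + (1 / 12) * lap d (lap d v) p = g p) :
    -- (a) exact traction-free boundary condition at x_d = ±1/2
    ((∀ h : ℝ, 0 < h → h ≤ 1 →
        ∀ p : P d, (p.1 (nd d) = 1/2 ∨ p.1 (nd d) = -(1/2)) →
          ∀ i : Fin d, h⁻¹ * symh d h θ v i (nd d) p = 0) ∧
    -- (b) the residual is O(h^{2+θ}) in C([0,T];L²(Ω))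
      ∃ C > (0 : ℝ), ∀ h : ℝ, 0 < h → h ≤ 1 → ∀ t ∈ Icc (0 : ℝ) T,
        (∫ X in OmegaX d L, ∑ i, (resid d h θ v g i (X, t)) ^ 2)
          ≤ C * (h ^ ((2 : ℝ) + θ)) ^ 2) := by
  have hIv : S19.InvN v := S19.invN_of_tang hvtang
  constructor
  · intro h hh hh1 p hp i
    by_cases hi : (i : ℕ) < d - 1
    · rw [S19.symh_TN hv hIv hh θ hi p, S19.qBp_bdry hp, S19.qC_bdry hp]
      ring
    · rw [S19.eq_nd_of_not_tang hi, S19.symh_NN hv hIv hh θ p, S19.qCp_bdry hp]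
      ring
  · classical
    set Kbox : Set (Fin d → ℝ) := Set.univ.pi (fun _ : Fin d => Icc (-(L+1)) (L+1)) with hKbox
    have hKboxc : IsCompact Kbox := isCompact_univ_pi fun _ => isCompact_Icc
    set K : Set (P d) := Kbox ×ˢ Icc (0:ℝ) T with hK
    have hKc : IsCompact K := hKboxc.prod isCompact_Icc
    have hΦc : Continuous (fun p : P d => ∑ i, (S19.psiF v i p)^2) :=
      continuous_finset_sum _ fun i _ => (S19.psiF_continuous hv i).pow 2
    obtain ⟨M, hM⟩ := hKc.exists_bound_of_continuousOn hΦc.continuousOn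
    have hMnn : (0:ℝ) ≤ max M 0 := le_max_right _ _
    have hsub := S19.OmegaX_subset_box (d := d) hL
    have hmeas : MeasurableSet (OmegaX d L) := S19.OmegaX_measurable
    have hfin : volume (OmegaX d L) < ⊤ :=
      lt_of_le_of_lt (measure_mono hsub) hKboxc.measure_lt_top
    have hvolnn : (0:ℝ) ≤ (volume (OmegaX d L)).toReal := ENNReal.toReal_nonneg
    refine ⟨max M 0 * (volume (OmegaX d L)).toReal + 1, by nlinarith, ?_⟩
    intro h hh hh1 t ht
    have h2nn : (0:ℝ) ≤ h ^ ((2:ℝ)+θ) := Real.rpow_nonneg hh.le _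
    have key : ∀ X ∈ OmegaX d L,
        ∑ i, (resid d h θ v g i (X, t))^2 ≤ (h ^ ((2:ℝ)+θ))^2 * max M 0 := by
      intro X hX
      have hKmem : ((X : Fin d → ℝ), t) ∈ K := Set.mem_prod.2 ⟨hsub hX, ht⟩
      have hΦM : ∑ i, (S19.psiF v i (X, t))^2 ≤ max M 0 := by
        have hb := hM _ hKmem
        rw [Real.norm_eq_abs] at hb
        calc (∑ i, (S19.psiF v i (X, t))^2)
            ≤ |∑ i, (S19.psiF v i (X, t))^2| := le_abs_self _
          _ ≤ M := hb
          _ ≤ max M 0 := le_max_left _ _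
      calc ∑ i, (resid d h θ v g i (X, t))^2
          ≤ ∑ i, (h ^ ((2:ℝ)+θ) * S19.psiF v i (X, t))^2 := by
            refine Finset.sum_le_sum fun i _ => ?_
            have h1 := S19.resid_abs_le hv hIv hh hh1 θ hPDE i (X, t)
            calc (resid d h θ v g i (X, t))^2
                = |resid d h θ v g i (X, t)|^2 := (sq_abs _).symm
              _ ≤ (h ^ ((2:ℝ)+θ) * S19.psiF v i (X, t))^2 :=
                  pow_le_pow_left₀ (abs_nonneg _) h1 2
        _ = (h ^ ((2:ℝ)+θ))^2 * ∑ i, (S19.psiF v i (X, t))^2 := by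
            rw [Finset.mul_sum]
            exact Finset.sum_congr rfl fun i _ => by ring
        _ ≤ (h ^ ((2:ℝ)+θ))^2 * max M 0 :=
            mul_le_mul_of_nonneg_left hΦM (by positivity)
    have hcontres : Continuous (fun X : Fin d → ℝ => ∑ i, (resid d h θ v g i (X, t))^2) := by
      have hcp : Continuous (fun p : P d => ∑ i, (resid d h θ v g i p)^2) :=
        continuous_finset_sum _ fun i _ =>
          (S19.resid_continuous hv hIv hh θ hPDE i).pow 2
      exact hcp.comp (continuous_id.prodMk continuous_const)
    have hint_f : IntegrableOn (fun X => ∑ i, (resid d h θ v g i (X, t))^2)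
        (OmegaX d L) volume :=
      (hcontres.continuousOn.integrableOn_compact hKboxc).mono_set hsub
    have hint_g : IntegrableOn (fun _ : Fin d → ℝ => (h ^ ((2:ℝ)+θ))^2 * max M 0)
        (OmegaX d L) volume := integrableOn_const hfin.ne
    calc (∫ X in OmegaX d L, ∑ i, (resid d h θ v g i (X, t)) ^ 2)
        ≤ ∫ _X in OmegaX d L, (h ^ ((2:ℝ)+θ))^2 * max M 0 :=
          setIntegral_mono_on hint_f hint_g hmeas key
      _ = (volume (OmegaX d L)).toReal * ((h ^ ((2:ℝ)+θ))^2 * max M 0) := by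
          rw [setIntegral_const, smul_eq_mul, Measure.real]
      _ ≤ (max M 0 * (volume (OmegaX d L)).toReal + 1) * (h ^ ((2:ℝ)+θ))^2 := by
          nlinarith [sq_nonneg (h ^ ((2:ℝ)+θ))]
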